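/- arXiv:2303.16296 — 2 statements merged into one kernel-verified Lean document; each statement's English description precedes it below -/
import Mathlib

section
/- For every p ≥ 1 and all nonzero a, b, c ∈ [0,1]^p, the relaxed triangle inequality Δ_DML2(a,c) ≤ ρ (Δ_DML2(a,b) + Δ_DML2(b,c)) holds with ρ = (1 + √5)/2. -/
open Finset

/-- The L¹ norm of a vector. -/
noncomputable def l1 {p : ℕ} (z : Fin p → ℝ) : ℝ := ∑ i, |z i|

/-- The first Dice semimetric loss. -/
noncomputable def DML1 {p : ℕ} (x y : Fin p → ℝ) : ℝ :=
  1 - (l1 (x + y) - l1 (x - y)) / l1 (x + y)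

/-- The second Dice semimetric loss. -/
noncomputable def DML2 {p : ℕ} (x y : Fin p → ℝ) : ℝ :=
  1 - 2 * l1 (x * y) / (2 * l1 (x * y) + l1 (x - y))

lemma key (u s u1 s1 u2 s2 : ℝ) (hs : 0 ≤ s) (hu1 : 0 ≤ u1) (hu2 : 0 ≤ u2)
    (hD : 0 < u + 2*s) (hD1 : 0 < u1 + 2*s1) (hD2 : 0 < u2 + 2*s2)
    (htri : u ≤ u1 + u2) (h1 : s1 ≤ s + u2) (h2 : s2 ≤ s + u1) :
    u/(u+2*s) ≤ 3/2 * (u1/(u1+2*s1) + u2/(u2+2*s2)) := by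
  have hA : (0:ℝ) < u1 + u2 + 2*s := by linarith
  have hB : (0:ℝ) < u1 + 2*s + 2*u2 := by linarith
  have hC : (0:ℝ) < u2 + 2*s + 2*u1 := by linarith
  have e1 : u/(u+2*s) ≤ (u1+u2)/(u1+u2+2*s) := by
    rw [div_le_div_iff₀ hD hA]; nlinarith
  have e2 : u1/(u1+2*s+2*u2) ≤ u1/(u1+2*s1) := by
    rw [div_le_div_iff₀ hB hD1]; nlinarith
  have e3 : u2/(u2+2*s+2*u1) ≤ u2/(u2+2*s2) := by
    rw [div_le_div_iff₀ hC hD2]; nlinarith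
  have e4 : (u1+u2)/(u1+u2+2*s) ≤ 3/2 * (u1/(u1+2*s+2*u2) + u2/(u2+2*s+2*u1)) := by
    rw [div_add_div _ _ (ne_of_gt hB) (ne_of_gt hC), ← mul_div_assoc,
      div_le_div_iff₀ hA (mul_pos hB hC)]
    nlinarith [mul_nonneg (add_nonneg hu1 hu2) (sq_nonneg (u1-u2)),
      mul_nonneg hs (add_nonneg (sq_nonneg u1) (sq_nonneg u2)),
      mul_nonneg (mul_nonneg hs hs) (add_nonneg hu1 hu2)]
  linarith

lemma l1_nonneg {p : ℕ} (z : Fin p → ℝ) : 0 ≤ l1 z :=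
  Finset.sum_nonneg fun i _ => abs_nonneg _

lemma denom_pos {p : ℕ} (x y : Fin p → ℝ)
    (hx : ∀ i, 0 ≤ x i ∧ x i ≤ 1) (hy : ∀ i, 0 ≤ y i ∧ y i ≤ 1) (hx0 : x ≠ 0) :
    0 < l1 (x - y) + 2 * l1 (x * y) := by
  obtain ⟨i, hi⟩ := Function.ne_iff.1 hx0
  have hxi : 0 < x i := lt_of_le_of_ne (hx i).1 (by simpa [eq_comm] using hi)
  have hterm : 0 < |(x - y) i| + 2 * |(x * y) i| := by
    rcases eq_or_lt_of_le (hy i).1 with h | h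
    · have hxy : (x - y) i = x i := by simp [← h]
      rw [hxy, abs_of_pos hxi]
      linarith [abs_nonneg ((x * y) i)]
    · have hp : 0 < (x * y) i := mul_pos hxi h
      rw [abs_of_pos hp]
      linarith [abs_nonneg ((x - y) i)]
  calc 0 < |(x - y) i| + 2 * |(x * y) i| := hterm
    _ ≤ l1 (x - y) + 2 * l1 (x * y) := by
        unfold l1
        have h1 : |(x - y) i| ≤ ∑ j, |(x - y) j| :=
          Finset.single_le_sum (f := fun j => |(x - y) j|)
            (fun j _ => abs_nonneg _) (Finset.mem_univ i)
        have h2 : |(x * y) i| ≤ ∑ j, |(x * y) j| :=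
          Finset.single_le_sum (f := fun j => |(x * y) j|)
            (fun j _ => abs_nonneg _) (Finset.mem_univ i)
        linarith

lemma DML2_eq {p : ℕ} (x y : Fin p → ℝ) (h : 0 < l1 (x - y) + 2 * l1 (x * y)) :
    DML2 x y = l1 (x - y) / (l1 (x - y) + 2 * l1 (x * y)) := by
  unfold DML2
  have h1 : 2 * l1 (x * y) + l1 (x - y) ≠ 0 := by linarith
  have h2 : l1 (x - y) + 2 * l1 (x * y) ≠ 0 := ne_of_gt h
  have hsum : 2 * l1 (x * y) / (2 * l1 (x * y) + l1 (x - y)) +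
      l1 (x - y) / (l1 (x - y) + 2 * l1 (x * y)) = 1 := by
    rw [div_add_div _ _ h1 h2, div_eq_one_iff_eq (mul_ne_zero h1 h2)]
    ring
  linarith

lemma l1_tri {p : ℕ} (a b c : Fin p → ℝ) : l1 (a - c) ≤ l1 (a - b) + l1 (b - c) := by
  unfold l1
  rw [← Finset.sum_add_distrib]
  refine Finset.sum_le_sum fun i _ => ?_
  simpa using abs_sub_le (a i) (b i) (c i)

lemma l1_prod_le {p : ℕ} (a b c : Fin p → ℝ)
    (ha : ∀ i, 0 ≤ a i ∧ a i ≤ 1) (hb : ∀ i, 0 ≤ b i ∧ b i ≤ 1)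
    (hc : ∀ i, 0 ≤ c i ∧ c i ≤ 1) :
    l1 (a * b) ≤ l1 (a * c) + l1 (b - c) := by
  unfold l1
  rw [← Finset.sum_add_distrib]
  refine Finset.sum_le_sum fun i _ => ?_
  simp only [Pi.mul_apply, Pi.sub_apply]
  rw [abs_of_nonneg (mul_nonneg (ha i).1 (hb i).1),
    abs_of_nonneg (mul_nonneg (ha i).1 (hc i).1)]
  rcases abs_cases (b i - c i) with ⟨h, _⟩ | ⟨h, _⟩ <;> rw [h] <;>
    nlinarith [(ha i).1, (ha i).2, (hb i).1, (hc i).1]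

/-- The relaxed triangle inequality for the second Dice semimetric loss with
`ρ = (1 + √5)/2` (part of Theorem 1). -/
theorem dml2_relaxed_triangle {p : ℕ} (hp : 1 ≤ p) (a b c : Fin p → ℝ)
    (ha : ∀ i, 0 ≤ a i ∧ a i ≤ 1) (hb : ∀ i, 0 ≤ b i ∧ b i ≤ 1)
    (hc : ∀ i, 0 ≤ c i ∧ c i ≤ 1)
    (ha0 : a ≠ 0) (hb0 : b ≠ 0) (hc0 : c ≠ 0) :
    DML2 a c ≤ (1 + Real.sqrt 5) / 2 * (DML2 a b + DML2 b c) := by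
  have hD : 0 < l1 (a - c) + 2 * l1 (a * c) := denom_pos a c ha hc ha0
  have hD1 : 0 < l1 (a - b) + 2 * l1 (a * b) := denom_pos a b ha hb ha0
  have hD2 : 0 < l1 (b - c) + 2 * l1 (b * c) := by
    have := denom_pos b c hb hc hb0; linarith [this]
  rw [DML2_eq a c hD, DML2_eq a b hD1, DML2_eq b c hD2]
  have h1 : l1 (a * b) ≤ l1 (a * c) + l1 (b - c) := l1_prod_le a b c ha hb hc
  have h2 : l1 (b * c) ≤ l1 (a * c) + l1 (a - b) := by
    have hl : l1 (b - a) = l1 (a - b) :=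
      Finset.sum_congr rfl (fun i _ => by simp [abs_sub_comm])
    calc l1 (b * c) = l1 (c * b) := by
          rw [show b * c = c * b from funext fun i => mul_comm _ _]
      _ ≤ l1 (c * a) + l1 (b - a) := l1_prod_le c b a hc hb ha
      _ = l1 (a * c) + l1 (a - b) := by
          rw [show c * a = a * c from funext fun i => mul_comm _ _, hl]
  have hkey := key (l1 (a - c)) (l1 (a * c)) (l1 (a - b)) (l1 (a * b))
    (l1 (b - c)) (l1 (b * c)) (l1_nonneg _) (l1_nonneg _) (l1_nonneg _)
    (by linarith) (by linarith) (by linarith)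
    (l1_tri a b c) (by linarith) (by linarith)
  have hphi : (3:ℝ)/2 ≤ (1 + Real.sqrt 5) / 2 := by
    have : (2:ℝ) ≤ Real.sqrt 5 := by
      rw [show (2:ℝ) = Real.sqrt 4 by rw [show (4:ℝ) = 2^2 by norm_num, Real.sqrt_sq]; norm_num]
      exact Real.sqrt_le_sqrt (by norm_num)
    linarith
  have hsum : 0 ≤ l1 (a - b) / (l1 (a - b) + 2 * l1 (a * b)) +
      l1 (b - c) / (l1 (b - c) + 2 * l1 (b * c)) := by
    have := l1_nonneg (a - b); have := l1_nonneg (b - c)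
    positivity
  calc l1 (a - c) / (l1 (a - c) + 2 * l1 (a * c))
      ≤ 3/2 * (l1 (a - b) / (l1 (a - b) + 2 * l1 (a * b)) +
        l1 (b - c) / (l1 (b - c) + 2 * l1 (b * c))) := hkey
    _ ≤ (1 + Real.sqrt 5) / 2 * (l1 (a - b) / (l1 (a - b) + 2 * l1 (a * b)) +
        l1 (b - c) / (l1 (b - c) + 2 * l1 (b * c))) :=
        mul_le_mul_of_nonneg_right hphi hsum
end

section
/- For every p ≥ 1, every x ∈ [0,1]^p and every y ∈ {0,1}^p with ‖x‖₁ + ‖y‖₁ > 0, Δ_SDL(x,y) = Δ_DML1(x,y) = Δ_DML2(x,y); and the same equalities hold when x ∈ {0,1}^p and y ∈ [0,1]^p with ‖x‖₁ + ‖y‖₁ > 0. -/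
open Finset

/-- The soft Dice loss. -/
noncomputable def SDL {p : ℕ} (x y : Fin p → ℝ) : ℝ :=
  1 - 2 * (∑ i, x i * y i) / (l1 x + l1 y)

/-! For `a ∈ [0,1]` and `b ∈ {0,1}` one has `|a - b| = a + b - 2ab`, so when one argument is a
hard label `‖x - y‖₁ = ‖x‖₁ + ‖y‖₁ - 2⟨x,y⟩`. Nonnegativity gives `‖x + y‖₁ = ‖x‖₁ + ‖y‖₁` and
`‖x ⊙ y‖₁ = ⟨x,y⟩`, and substituting these turns all three losses into
`1 - 2⟨x,y⟩ / (‖x‖₁ + ‖y‖₁)`. -/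

lemma abs_sub_eq_of_mem_zero_one {a b : ℝ} (ha₀ : 0 ≤ a) (ha₁ : a ≤ 1) (hb : b = 0 ∨ b = 1) :
    |a - b| = a + b - 2 * (a * b) := by
  rcases hb with rfl | rfl
  · rw [sub_zero, abs_of_nonneg ha₀]
    ring
  · rw [abs_of_nonpos (by linarith)]
    ring

section L1

variable {p : ℕ} {x y : Fin p → ℝ}

lemma l1_of_nonneg (hx : ∀ i, 0 ≤ x i) : l1 x = ∑ i, x i :=
  sum_congr rfl fun i _ => abs_of_nonneg (hx i)

lemma l1_add_of_nonneg (hx : ∀ i, 0 ≤ x i) (hy : ∀ i, 0 ≤ y i) :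
    l1 (x + y) = l1 x + l1 y := by
  rw [l1_of_nonneg (x := x + y) fun i => add_nonneg (hx i) (hy i), l1_of_nonneg hx,
    l1_of_nonneg hy]
  exact sum_add_distrib

lemma l1_mul_of_nonneg (hx : ∀ i, 0 ≤ x i) (hy : ∀ i, 0 ≤ y i) :
    l1 (x * y) = ∑ i, x i * y i :=
  l1_of_nonneg (x := x * y) fun i => mul_nonneg (hx i) (hy i)

lemma l1_sub_of_abs_sub (hx : ∀ i, 0 ≤ x i) (hy : ∀ i, 0 ≤ y i)
    (h : ∀ i, |x i - y i| = x i + y i - 2 * (x i * y i)) :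
    l1 (x - y) = l1 x + l1 y - 2 * ∑ i, x i * y i := by
  rw [l1_of_nonneg hx, l1_of_nonneg hy, mul_sum, ← sum_add_distrib, ← sum_sub_distrib]
  exact sum_congr rfl fun i _ => h i

lemma dml1_eq_sdl (hadd : l1 (x + y) = l1 x + l1 y)
    (hsub : l1 (x - y) = l1 x + l1 y - 2 * ∑ i, x i * y i) :
    DML1 x y = SDL x y := by
  rw [DML1, SDL, hadd, hsub, sub_sub_cancel]

lemma dml2_eq_sdl (hmul : l1 (x * y) = ∑ i, x i * y i)
    (hsub : l1 (x - y) = l1 x + l1 y - 2 * ∑ i, x i * y i) :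
    DML2 x y = SDL x y := by
  rw [DML2, SDL, hmul, hsub, add_sub_cancel]

end L1

theorem sdl_eq_dml_hard_labels_general {p : ℕ} (x y : Fin p → ℝ)
    (hx : ∀ i, 0 ≤ x i ∧ x i ≤ 1) (hy : ∀ i, 0 ≤ y i ∧ y i ≤ 1)
    (hhard : (∀ i, y i = 0 ∨ y i = 1) ∨ (∀ i, x i = 0 ∨ x i = 1)) :
    SDL x y = DML1 x y ∧ DML1 x y = DML2 x y := by
  have hx₀ i := (hx i).1
  have hy₀ i := (hy i).1
  have habs : ∀ i, |x i - y i| = x i + y i - 2 * (x i * y i) := by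
    intro i
    rcases hhard with hyhard | hxhard
    · exact abs_sub_eq_of_mem_zero_one (hx i).1 (hx i).2 (hyhard i)
    · rw [abs_sub_comm, abs_sub_eq_of_mem_zero_one (hy i).1 (hy i).2 (hxhard i)]
      ring
  have hsub := l1_sub_of_abs_sub hx₀ hy₀ habs
  have hdml1 := dml1_eq_sdl (l1_add_of_nonneg hx₀ hy₀) hsub
  exact ⟨hdml1.symm, hdml1.trans (dml2_eq_sdl (l1_mul_of_nonneg hx₀ hy₀) hsub).symm⟩

/-- Theorem 2 (first half): when one of the two arguments is a hard (0-1) label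
vector, the soft Dice loss coincides with both Dice semimetric losses. -/
theorem sdl_eq_dml_hard_labels {p : ℕ} (hp : 1 ≤ p) (x y : Fin p → ℝ)
    (hx : ∀ i, 0 ≤ x i ∧ x i ≤ 1) (hy : ∀ i, 0 ≤ y i ∧ y i ≤ 1)
    (hpos : 0 < l1 x + l1 y)
    (hhard : (∀ i, y i = 0 ∨ y i = 1) ∨ (∀ i, x i = 0 ∨ x i = 1)) :
    SDL x y = DML1 x y ∧ DML1 x y = DML2 x y :=
  sdl_eq_dml_hard_labels_general x y hx hy hhard
end
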